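/- arXiv:1707.07470 — 2 statements merged into one kernel-verified Lean document; each statement's English description precedes it below -/
import Mathlib

section
/- Rough Gronwall Lemma: Let T > 0, I = [0,T], and let G : I → [0,∞). Assume there exist a regular control ω on I, constants L > 0 and κ > 0, and a superadditive map φ : Δ_I → ℝ such that G_t − G_s ≤ (sup_{s ≤ r ≤ t} G_r)·ω(s,t)^{1/κ} + φ(s,t) for every (s,t) ∈ Δ_I with ω(s,t) ≤ L. Then there exists a constant τ > 0, depending only on κ and L, such that sup_{0 ≤ t ≤ T} G_t ≤ 2·exp(ω(0,T)/τ)·[ G_0 + sup_{0 ≤ t ≤ T} ( |φ(0,t)|·exp(−ω(0,t)/τ) ) ]. -/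
/-!
Choose a scale `α ≤ L` so small that `ω(s,t) ≤ α` forces `ω(s,t)^{1/κ} ≤ 1/4`. On an interval
`[s,u]` with `ω(s,u) ≤ α`, the running supremum of `G` then satisfies a fixed-point inequality
`M ≤ A + M/4`, so it is at most `4A/3`, and `G - φ(0,·)` grows by at most a factor `4/3` plus a
`φ`-term across the interval. Since `ω` is continuous, `[0,u]` is cut into blocks on which `ω(0,·)`
increases by exactly `α`, and induction on the number of blocks gives
`G_u - φ(0,u) ≤ 2^{ω(0,u)/α} (2 G_0 + S)`, which is the claim with `τ = α / log 2`.
-/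

open Set

/-- `ω` is a control on the interval `[0,T]`: a nonnegative superadditive
map on the simplex `Δ_I = {(s,t) : 0 ≤ s ≤ t ≤ T}`. -/
def IsControl (T : ℝ) (ω : ℝ → ℝ → ℝ) : Prop :=
  (∀ s t, 0 ≤ s → s ≤ t → t ≤ T → 0 ≤ ω s t) ∧
  (∀ s θ t, 0 ≤ s → s ≤ θ → θ ≤ t → t ≤ T → ω s θ + ω θ t ≤ ω s t)

/-- A regular control is a continuous control. -/
def IsRegularControl (T : ℝ) (ω : ℝ → ℝ → ℝ) : Prop :=
  IsControl T ω ∧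
    ContinuousOn (fun p : ℝ × ℝ => ω p.1 p.2)
      {p : ℝ × ℝ | 0 ≤ p.1 ∧ p.1 ≤ p.2 ∧ p.2 ≤ T}

namespace IsControl

variable {T : ℝ} {ω : ℝ → ℝ → ℝ}

lemma apply_self (hω : IsControl T ω) {s : ℝ} (hs : 0 ≤ s) (hsT : s ≤ T) : ω s s = 0 := by
  have := hω.2 s s s hs le_rfl le_rfl hsT
  have := hω.1 s s hs le_rfl hsT
  linarith

lemma apply_le_sub (hω : IsControl T ω) {a s u : ℝ} (ha : 0 ≤ a) (has : a ≤ s) (hsu : s ≤ u)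
    (huT : u ≤ T) : ω s u ≤ ω a u - ω a s := by
  linarith [hω.2 a s u ha has hsu huT]

lemma monotoneOn (hω : IsControl T ω) {a : ℝ} (ha : 0 ≤ a) : MonotoneOn (ω a) (Icc a T) :=
  fun x hx y hy hxy => by
    linarith [hω.2 a x y ha hx.1 hxy hy.2, hω.1 x y (ha.trans hx.1) hxy hy.2]

end IsControl

namespace IsRegularControl

variable {T : ℝ} {ω : ℝ → ℝ → ℝ}

lemma continuousOn_apply (hω : IsRegularControl T ω) {a : ℝ} (ha : 0 ≤ a) :
    ContinuousOn (ω a) (Icc a T) :=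
  hω.2.comp (f := fun x => (a, x)) (Continuous.continuousOn (by fun_prop))
    fun _ hx => ⟨ha, hx.1, hx.2⟩

lemma surjOn_Icc (hω : IsRegularControl T ω) {a u : ℝ} (ha : 0 ≤ a) (hau : a ≤ u)
    (huT : u ≤ T) : SurjOn (ω a) (Icc a u) (Icc 0 (ω a u)) := by
  have := intermediate_value_Icc hau
    ((hω.continuousOn_apply ha).mono (Icc_subset_Icc_right huT))
  rwa [hω.1.apply_self ha (hau.trans huT)] at this

end IsRegularControl

lemma sSup_image_Icc_le_div_one_sub {G : ℝ → ℝ} {s u A ε : ℝ} (hsu : s ≤ u) (hε0 : 0 ≤ ε)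
    (hε1 : ε < 1) (hA : 0 ≤ A) (h : ∀ r ∈ Icc s u, G r ≤ A + sSup (G '' Icc s r) * ε) :
    sSup (G '' Icc s u) ≤ A / (1 - ε) := by
  rw [le_div_iff₀ (sub_pos.2 hε1)]
  by_cases hbdd : BddAbove (G '' Icc s u)
  · suffices sSup (G '' Icc s u) ≤ A + sSup (G '' Icc s u) * ε by linarith
    refine csSup_le ((nonempty_Icc.2 hsu).image G) ?_
    rintro _ ⟨r, hr, rfl⟩
    have hmono : sSup (G '' Icc s r) ≤ sSup (G '' Icc s u) :=
      csSup_le_csSup hbdd ((nonempty_Icc.2 hr.1).image G)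
        (image_mono (Icc_subset_Icc_right hr.2))
    linarith [h r hr, mul_le_mul_of_nonneg_right hmono hε0]
  · rw [Real.sSup_of_not_bddAbove hbdd, zero_mul]
    exact hA

lemma sub_sub_le_of_sub_le_sSup_mul_add {G ψ c : ℝ → ℝ} {s u C ε : ℝ} (hsu : s ≤ u)
    (hε1 : ε < 1) (hG : ∀ r ∈ Icc s u, 0 ≤ G r) (hc : ∀ r ∈ Icc s u, c r ∈ Icc 0 ε)
    (hψ : ∀ r ∈ Icc s u, ψ r ≤ C) (hC : 0 ≤ G s + C)
    (h : ∀ r ∈ Icc s u, G r - G s ≤ sSup (G '' Icc s r) * c r + ψ r) :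
    G u - G s - ψ u ≤ ε / (1 - ε) * (G s + C) := by
  have hu : u ∈ Icc s u := right_mem_Icc.2 hsu
  have hε0 : 0 ≤ ε := (hc u hu).1.trans (hc u hu).2
  have hM : sSup (G '' Icc s u) ≤ (G s + C) / (1 - ε) := by
    refine sSup_image_Icc_le_div_one_sub hsu hε0 hε1 hC fun r hr => ?_
    have hM_nonneg : 0 ≤ sSup (G '' Icc s r) := Real.sSup_nonneg <| by
      rintro _ ⟨x, hx, rfl⟩
      exact hG x ⟨hx.1, hx.2.trans hr.2⟩
    linarith [h r hr, hψ r hr, mul_le_mul_of_nonneg_left (hc r hr).2 hM_nonneg]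
  calc G u - G s - ψ u ≤ sSup (G '' Icc s u) * c u := by linarith [h u hu]
    _ ≤ (G s + C) / (1 - ε) * ε :=
      mul_le_mul hM (hc u hu).2 (hc u hu).1 (div_nonneg hC (sub_pos.2 hε1).le)
    _ = ε / (1 - ε) * (G s + C) := by ring

/-- `c s t` stands for the rough factor `ω(s,t)^{1/κ}`, and `S` for
`sup_t |φ(0,t)| e^{-ω(0,t)/τ}` with `e^{1/τ} = 2^{1/α}`. -/
structure RoughGronwallCondition (T α S : ℝ) (G : ℝ → ℝ) (ω φ c : ℝ → ℝ → ℝ) : Prop where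
  scale_pos : 0 < α
  bound_nonneg : 0 ≤ S
  nonneg : ∀ t ∈ Icc 0 T, 0 ≤ G t
  regularControl : IsRegularControl T ω
  superadditive : ∀ s θ t, 0 ≤ s → s ≤ θ → θ ≤ t → t ≤ T → φ s θ + φ θ t ≤ φ s t
  factor_mem : ∀ s t, 0 ≤ s → s ≤ t → t ≤ T → ω s t ≤ α → c s t ∈ Icc 0 (1 / 4)
  sub_le : ∀ s t, 0 ≤ s → s ≤ t → t ≤ T → ω s t ≤ α →
    G t - G s ≤ sSup (G '' Icc s t) * c s t + φ s t
  phi_le : ∀ r ∈ Icc 0 T, φ 0 r ≤ S * 2 ^ (ω 0 r / α)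

namespace RoughGronwallCondition

variable {T α S : ℝ} {G : ℝ → ℝ} {ω φ c : ℝ → ℝ → ℝ}

lemma two_rpow_le (h : RoughGronwallCondition T α S G ω φ c) {r u : ℝ} (hr : 0 ≤ r)
    (hru : r ≤ u) (huT : u ≤ T) : (2 : ℝ) ^ (ω 0 r / α) ≤ 2 ^ (ω 0 u / α) :=
  Real.rpow_le_rpow_of_exponent_le one_le_two <| div_le_div_of_nonneg_right
    (h.regularControl.1.monotoneOn le_rfl ⟨hr, hru.trans huT⟩ ⟨hr.trans hru, huT⟩ hru)
    h.scale_pos.le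

lemma phi_zero_le (h : RoughGronwallCondition T α S G ω φ c) {r u : ℝ} (hr : 0 ≤ r)
    (hru : r ≤ u) (huT : u ≤ T) : φ 0 r ≤ S * 2 ^ (ω 0 u / α) :=
  (h.phi_le r ⟨hr, hru.trans huT⟩).trans
    (mul_le_mul_of_nonneg_left (h.two_rpow_le hr hru huT) h.bound_nonneg)

lemma sub_sub_le_div_three (h : RoughGronwallCondition T α S G ω φ c) {s u C : ℝ}
    {ψ : ℝ → ℝ} (hs : 0 ≤ s) (hsu : s ≤ u) (huT : u ≤ T) (hωsu : ω s u ≤ α)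
    (hψ : ∀ r ∈ Icc s u, φ s r ≤ ψ r ∧ ψ r ≤ C) (hC : 0 ≤ G s + C) :
    G u - G s - ψ u ≤ (G s + C) / 3 := by
  have hω : ∀ r ∈ Icc s u, ω s r ≤ α := fun r hr =>
    (h.regularControl.1.monotoneOn hs ⟨hr.1, hr.2.trans huT⟩ ⟨hsu, huT⟩ hr.2).trans hωsu
  have := sub_sub_le_of_sub_le_sSup_mul_add (c := c s) (ε := 1 / 4) hsu (by norm_num)
    (fun r hr => h.nonneg r ⟨hs.trans hr.1, hr.2.trans huT⟩)
    (fun r hr => h.factor_mem s r hs hr.1 (hr.2.trans huT) (hω r hr))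
    (fun r hr => (hψ r hr).2) hC
    fun r hr => by linarith [h.sub_le s r hs hr.1 (hr.2.trans huT) (hω r hr), (hψ r hr).1]
  linarith

lemma sub_phi_le_of_le (h : RoughGronwallCondition T α S G ω φ c) {u : ℝ} (hu : 0 ≤ u)
    (huT : u ≤ T) (hωu : ω 0 u ≤ α) :
    G u - φ 0 u ≤ 2 ^ (ω 0 u / α) * (2 * G 0 + S) := by
  have hE : (1 : ℝ) ≤ 2 ^ (ω 0 u / α) := Real.one_le_rpow one_le_two
    (div_nonneg (h.regularControl.1.1 0 u le_rfl hu huT) h.scale_pos.le)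
  have hG0 : 0 ≤ G 0 := h.nonneg 0 ⟨le_rfl, hu.trans huT⟩
  have := h.sub_sub_le_div_three (ψ := φ 0) le_rfl hu huT hωu
    (fun r hr => ⟨le_rfl, h.phi_zero_le hr.1 hr.2 huT⟩) (by have := h.bound_nonneg; positivity)
  nlinarith [h.bound_nonneg]

lemma sub_phi_le_of_sub (h : RoughGronwallCondition T α S G ω φ c) {s u : ℝ} (hs : 0 ≤ s)
    (hsu : s ≤ u) (huT : u ≤ T) (hωs : ω 0 s = ω 0 u - α)
    (ih : G s - φ 0 s ≤ 2 ^ (ω 0 s / α) * (2 * G 0 + S)) :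
    G u - φ 0 u ≤ 2 ^ (ω 0 u / α) * (2 * G 0 + S) := by
  have hhalf : (2 : ℝ) ^ (ω 0 s / α) = 2 ^ (ω 0 u / α) / 2 := by
    rw [hωs, sub_div, div_self h.scale_pos.ne', Real.rpow_sub_one two_ne_zero]
  have hωsu : ω s u ≤ α :=
    (h.regularControl.1.apply_le_sub le_rfl hs hsu huT).trans (by linarith)
  have := h.sub_sub_le_div_three (ψ := fun r => φ 0 r - φ 0 s)
    (C := S * 2 ^ (ω 0 u / α) - φ 0 s) hs hsu huT hωsu
    (fun r hr => ⟨by linarith [h.superadditive 0 s r le_rfl hs hr.1 (hr.2.trans huT)],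
      by linarith [h.phi_zero_le (hs.trans hr.1) hr.2 huT]⟩)
    (by linarith [h.nonneg s ⟨hs, hsu.trans huT⟩, h.phi_zero_le hs hsu huT])
  have hEG0 : 0 ≤ (2 : ℝ) ^ (ω 0 u / α) * G 0 :=
    mul_nonneg (by positivity) (h.nonneg 0 ⟨le_rfl, hs.trans (hsu.trans huT)⟩)
  rw [hhalf] at ih
  linarith

lemma sub_phi_le (h : RoughGronwallCondition T α S G ω φ c) {u : ℝ} (hu : 0 ≤ u)
    (huT : u ≤ T) : G u - φ 0 u ≤ 2 ^ (ω 0 u / α) * (2 * G 0 + S) := by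
  have hblocks : ∀ n : ℕ, ∀ u, 0 ≤ u → u ≤ T → ω 0 u ≤ (n + 1) * α →
      G u - φ 0 u ≤ 2 ^ (ω 0 u / α) * (2 * G 0 + S) := by
    intro n
    induction n with
    | zero => exact fun u hu huT hωu => h.sub_phi_le_of_le hu huT (by simpa using hωu)
    | succ n ih =>
      intro u hu huT hωu
      rcases le_or_gt (ω 0 u) ((n + 1) * α) with hle | hlt
      · exact ih u hu huT hle
      have hnα : 0 ≤ (n : ℝ) * α := mul_nonneg n.cast_nonneg h.scale_pos.le
      obtain ⟨s, ⟨hs, hsu⟩, hωs⟩ := h.regularControl.surjOn_Icc le_rfl hu huT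
        (show ω 0 u - α ∈ Icc 0 (ω 0 u) from ⟨by linarith, by linarith [h.scale_pos]⟩)
      push_cast at hωu
      exact h.sub_phi_le_of_sub hs hsu huT hωs (ih s hs (hsu.trans huT) (by linarith))
  obtain ⟨n, hn⟩ := exists_nat_ge (ω 0 u / α)
  rw [div_le_iff₀ h.scale_pos] at hn
  exact hblocks n u hu huT (by linarith [h.scale_pos])

end RoughGronwallCondition

/-- **Rough Gronwall Lemma.**  Given `κ, L > 0` there is a constant `τ > 0`,
depending only on `κ` and `L`, such that for every `T > 0`, every
`G : [0,T] → [0,∞)`, every regular control `ω`, and every superadditive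
`φ : Δ_I → ℝ` satisfying
`G_t − G_s ≤ (sup_{s ≤ r ≤ t} G_r) · ω(s,t)^{1/κ} + φ(s,t)` whenever
`ω(s,t) ≤ L`, one has
`sup_{0 ≤ t ≤ T} G_t ≤ 2·exp(ω(0,T)/τ)·[G_0 + sup_{0 ≤ t ≤ T}(|φ(0,t)|·exp(−ω(0,t)/τ))]`. -/
theorem rough_gronwall (κ L : ℝ) (hκ : 0 < κ) (hL : 0 < L) :
    ∃ τ : ℝ, 0 < τ ∧
      ∀ (T : ℝ), 0 < T →
      ∀ (G : ℝ → ℝ) (ω φ : ℝ → ℝ → ℝ),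
        (∀ t, 0 ≤ t → t ≤ T → 0 ≤ G t) →
        IsRegularControl T ω →
        (∀ s θ t, 0 ≤ s → s ≤ θ → θ ≤ t → t ≤ T → φ s θ + φ θ t ≤ φ s t) →
        (∀ s t, 0 ≤ s → s ≤ t → t ≤ T → ω s t ≤ L →
          G t - G s ≤ sSup (G '' Icc s t) * ω s t ^ (1 / κ) + φ s t) →
        ∀ S : ℝ,
          (∀ r, 0 ≤ r → r ≤ T → |φ 0 r| * Real.exp (-ω 0 r / τ) ≤ S) →
          ∀ t, 0 ≤ t → t ≤ T →
            G t ≤ 2 * Real.exp (ω 0 T / τ) * (G 0 + S) := by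
  set α := min L ((1 / 4 : ℝ) ^ κ)
  have hα : 0 < α := lt_min hL (by positivity)
  refine ⟨α / Real.log 2, div_pos hα (Real.log_pos one_lt_two), ?_⟩
  intro T hT G ω φ hG hω hφ hinc S hS t ht htT
  have hexp : ∀ x, Real.exp (x / (α / Real.log 2)) = 2 ^ (x / α) := fun x => by
    rw [Real.rpow_def_of_pos two_pos, div_div_eq_mul_div, mul_div_right_comm, mul_comm]
  have h : RoughGronwallCondition T α S G ω φ (fun s t => ω s t ^ (1 / κ)) :=
    { scale_pos := hα
      bound_nonneg := (by positivity : 0 ≤ |φ 0 0| * _).trans (hS 0 le_rfl hT.le)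
      nonneg := fun t ht => hG t ht.1 ht.2
      regularControl := hω
      superadditive := hφ
      factor_mem := fun s t hs hst htT hωst => by
        have hω0 := hω.1.1 s t hs hst htT
        refine ⟨by positivity, ?_⟩
        rw [one_div κ, Real.rpow_inv_le_iff_of_pos hω0 (by norm_num) hκ]
        exact hωst.trans (min_le_right _ _)
      sub_le := fun s t hs hst htT hωst => hinc s t hs hst htT (hωst.trans (min_le_left _ _))
      phi_le := fun r hr => by
        have := hS r hr.1 hr.2
        rw [neg_div, Real.exp_neg, mul_inv_le_iff₀ (Real.exp_pos _), hexp] at this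
        exact (le_abs_self _).trans this }
  rw [hexp]
  nlinarith [h.sub_phi_le ht htT, h.phi_zero_le ht le_rfl htT, h.two_rpow_le ht htT le_rfl,
    h.bound_nonneg, h.nonneg 0 ⟨le_rfl, hT.le⟩]
end

section
/- Tensorized drift bound (core estimate of Lemma 4.2): Let d ≥ 1 and Ω := {(x,y) ∈ ℝ^d×ℝ^d : |x−y| ≤ 2}. There is a constant C, depending only on d, with the following property. Let u¹, u² ∈ L²(ℝ^d) and let f⁰, f¹, …, f^d and g⁰, g¹, …, g^d belong to L²(ℝ^d). Then for every bounded Lipschitz Φ : ℝ^d×ℝ^d → ℝ vanishing outside Ω: | ∫_{ℝ^d} u¹(x)·( ∫_{ℝ^d} ( f⁰(y)·Φ(x,y) + Σ_{i=1}^d f^i(y)·∂_{y_i}Φ(x,y) ) dy ) dx + ∫_{ℝ^d} u²(y)·( ∫_{ℝ^d} ( g⁰(x)·Φ(x,y) + Σ_{i=1}^d g^i(x)·∂_{x_i}Φ(x,y) ) dx ) dy | ≤ C·( ‖u¹‖_{L²}·(Σ_{γ=0}^d ‖f^γ‖²_{L²})^{1/2} + ‖u²‖_{L²}·(Σ_{γ=0}^d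 ‖g^γ‖²_{L²})^{1/2} )·( sup|Φ| + Lip(Φ) ), where ∂_{x_i}Φ, ∂_{y_i}Φ denote the almost-everywhere defined partial derivatives of the Lipschitz function Φ. -/
/-!
Both terms are integrals against kernels such as `f⁰(y) Φ(x,y) + Σᵢ fⁱ(y) ∂_{y_i}Φ(x,y)`, which
are bounded by `(sup|Φ| + Lip Φ) Σ_γ |f^γ(y)|` and vanish unless `|x - y| ≤ 2`. Every row and
every column of the kernel `1_{|x-y| ≤ 2}` has mass `|B₂|`, the volume of a ball of radius 2,
so the Schur test bounds each term by `|B₂| (sup|Φ| + Lip Φ) ‖u‖₂ ‖Σ_γ |f^γ|‖₂`, and Minkowski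
and Cauchy–Schwarz give `‖Σ_γ |f^γ|‖₂ ≤ √(d+1) (Σ_γ ‖f^γ‖₂²)^{1/2}`. Hence `C = |B₂| √(d+1)`.
-/

open MeasureTheory Metric
open scoped ENNReal NNReal

section Schur

variable {α β : Type*} [MeasurableSpace α] [MeasurableSpace β] {μ : Measure α} {ν : Measure β}

lemma eLpNorm_two_eq_lintegral_rpow (a : α → ℝ≥0∞) :
    eLpNorm a 2 μ = (∫⁻ x, a x ^ (2 : ℝ) ∂μ) ^ (1 / 2 : ℝ) := by
  rw [eLpNorm_eq_lintegral_rpow_enorm_toReal two_ne_zero ENNReal.ofNat_ne_top]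
  simp

lemma lintegral_lintegral_mul_kernel_le {c : α → ℝ≥0∞} {k : α → β → ℝ≥0∞}
    (hc : AEMeasurable c μ) (hk : ∀ x, Measurable (k x)) {V : ℝ≥0∞}
    (hV : ∀ x, ∫⁻ y, k x y ∂ν ≤ V) :
    ∫⁻ x, ∫⁻ y, c x * k x y ∂ν ∂μ ≤ V * ∫⁻ x, c x ∂μ :=
  calc ∫⁻ x, ∫⁻ y, c x * k x y ∂ν ∂μ = ∫⁻ x, c x * ∫⁻ y, k x y ∂ν ∂μ := by
        simp_rw [lintegral_const_mul _ (hk _)]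
    _ ≤ ∫⁻ x, V * c x ∂μ := lintegral_mono fun x => by rw [mul_comm]; gcongr; exact hV x
    _ = V * ∫⁻ x, c x ∂μ := lintegral_const_mul'' _ hc

variable [SFinite μ] [SFinite ν]

/-- The **Schur test**. -/
theorem lintegral_lintegral_mul_kernel_mul_le {a : α → ℝ≥0∞} {b : β → ℝ≥0∞}
    {k : α → β → ℝ≥0∞} (ha : AEMeasurable a μ) (hb : AEMeasurable b ν)
    (hk : Measurable (Function.uncurry k)) {V W : ℝ≥0∞} (hV : ∀ x, ∫⁻ y, k x y ∂ν ≤ V)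
    (hW : ∀ y, ∫⁻ x, k x y ∂μ ≤ W) :
    ∫⁻ x, ∫⁻ y, a x * k x y * b y ∂ν ∂μ ≤
      (V * W) ^ (1 / 2 : ℝ) * eLpNorm a 2 μ * eLpNorm b 2 ν := by
  -- Cauchy–Schwarz on `μ.prod ν` for `F = a √k` and `G = √k b`.
  have hk' : AEMeasurable (Function.uncurry k) (μ.prod ν) := hk.aemeasurable
  set F : α × β → ℝ≥0∞ := fun p => a p.1 * Function.uncurry k p ^ (1 / 2 : ℝ)
  set G : α × β → ℝ≥0∞ := fun p => Function.uncurry k p ^ (1 / 2 : ℝ) * b p.2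
  have hF : AEMeasurable F (μ.prod ν) :=
    (ha.comp_quasiMeasurePreserving Measure.quasiMeasurePreserving_fst).mul (hk'.pow_const _)
  have hG : AEMeasurable G (μ.prod ν) :=
    (hk'.pow_const _).mul (hb.comp_quasiMeasurePreserving Measure.quasiMeasurePreserving_snd)
  have hsq : ∀ s t : ℝ≥0∞, (s * t ^ (1 / 2 : ℝ)) ^ (2 : ℝ) = s ^ (2 : ℝ) * t := fun s t => by
    rw [ENNReal.mul_rpow_of_nonneg _ _ zero_le_two, ← ENNReal.rpow_mul]; norm_num
  have hF2 : ∫⁻ p, F p ^ (2 : ℝ) ∂(μ.prod ν) ≤ V * ∫⁻ x, a x ^ (2 : ℝ) ∂μ := by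
    rw [lintegral_prod _ (hF.pow_const _)]
    simp only [F, hsq, Function.uncurry_apply_pair]
    exact lintegral_lintegral_mul_kernel_le (ha.pow_const _) (fun _ => hk.of_uncurry_left) hV
  have hG2 : ∫⁻ p, G p ^ (2 : ℝ) ∂(μ.prod ν) ≤ W * ∫⁻ y, b y ^ (2 : ℝ) ∂ν := by
    rw [lintegral_prod_symm _ (hG.pow_const _)]
    simp only [G, mul_comm _ (b _), hsq, Function.uncurry_apply_pair]
    exact lintegral_lintegral_mul_kernel_le (hb.pow_const _) (fun _ => hk.of_uncurry_right) hW
  calc ∫⁻ x, ∫⁻ y, a x * k x y * b y ∂ν ∂μ = ∫⁻ p, F p * G p ∂(μ.prod ν) := by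
        rw [lintegral_prod (fun p => F p * G p) (hF.mul hG)]
        refine lintegral_congr fun x => lintegral_congr fun y => ?_
        have hroot : k x y ^ (1 / 2 : ℝ) * k x y ^ (1 / 2 : ℝ) = k x y := by
          rw [← ENNReal.rpow_add_of_nonneg _ _ one_half_pos.le one_half_pos.le]; norm_num
        calc a x * k x y * b y = a x * (k x y ^ (1 / 2 : ℝ) * k x y ^ (1 / 2 : ℝ) * b y) := by
              rw [hroot, mul_assoc]
          _ = F (x, y) * G (x, y) := by simp only [F, G, Function.uncurry_apply_pair]; ring
    _ ≤ (∫⁻ p, F p ^ (2 : ℝ) ∂(μ.prod ν)) ^ (1 / 2 : ℝ) *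
          (∫⁻ p, G p ^ (2 : ℝ) ∂(μ.prod ν)) ^ (1 / 2 : ℝ) :=
        ENNReal.lintegral_mul_le_Lp_mul_Lq _ Real.HolderConjugate.two_two hF hG
    _ ≤ (V * ∫⁻ x, a x ^ (2 : ℝ) ∂μ) ^ (1 / 2 : ℝ) *
          (W * ∫⁻ y, b y ^ (2 : ℝ) ∂ν) ^ (1 / 2 : ℝ) := by
        gcongr
    _ = (V * W) ^ (1 / 2 : ℝ) * eLpNorm a 2 μ * eLpNorm b 2 ν := by
        simp only [eLpNorm_two_eq_lintegral_rpow,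
          ENNReal.mul_rpow_of_nonneg _ _ (by norm_num : (0 : ℝ) ≤ 1 / 2)]
        ring

end Schur

section Coefficients

variable {α : Type*} [MeasurableSpace α] {μ : Measure α}

lemma toReal_eLpNorm_sum_norm_le {E ι : Type*} [NormedAddCommGroup E] [Fintype ι]
    {p : ℝ≥0∞} (hp : 1 ≤ p) {f : ι → α → E} (hf : ∀ i, MemLp (f i) p μ) :
    (eLpNorm (fun x => ∑ i, ‖f i x‖) p μ).toReal ≤
      √(Fintype.card ι) * √(∑ i, (eLpNorm (f i) p μ).toReal ^ 2) := by
  have hsum : eLpNorm (fun x => ∑ i, ‖f i x‖) p μ ≤ ∑ i, eLpNorm (f i) p μ :=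
    calc eLpNorm (fun x => ∑ i, ‖f i x‖) p μ = eLpNorm (∑ i, fun x => ‖f i x‖) p μ := by
          simp only [Finset.sum_fn]
      _ ≤ ∑ i, eLpNorm (fun x => ‖f i x‖) p μ := eLpNorm_sum_le (fun i _ => (hf i).1.norm) hp
      _ = ∑ i, eLpNorm (f i) p μ := by simp only [eLpNorm_norm]
  calc (eLpNorm (fun x => ∑ i, ‖f i x‖) p μ).toReal ≤ ∑ i, (eLpNorm (f i) p μ).toReal := by
        rw [← ENNReal.toReal_sum fun i _ => (hf i).2.ne]
        exact ENNReal.toReal_mono (ENNReal.sum_ne_top.2 fun i _ => (hf i).2.ne) hsum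
    _ = ∑ i, 1 * (eLpNorm (f i) p μ).toReal := by simp only [one_mul]
    _ ≤ √(∑ i : ι, 1 ^ 2) * √(∑ i, (eLpNorm (f i) p μ).toReal ^ 2) :=
        Real.sum_mul_le_sqrt_mul_sqrt _ _ _
    _ = √(Fintype.card ι) * √(∑ i, (eLpNorm (f i) p μ).toReal ^ 2) := by simp

lemma abs_mul_add_sum_mul_le {n : ℕ} (a : Fin (n + 1) → ℝ) {c B : ℝ} {v : Fin n → ℝ}
    (hc : |c| ≤ B) (hv : ∀ i, |v i| ≤ B) :
    |a 0 * c + ∑ i, a i.succ * v i| ≤ B * ∑ γ, |a γ| := by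
  set w : Fin (n + 1) → ℝ := Fin.cons c v
  calc |a 0 * c + ∑ i, a i.succ * v i| = |∑ γ, a γ * w γ| := by
        simp [w, Fin.sum_univ_succ]
    _ ≤ ∑ γ, |a γ * w γ| := Finset.abs_sum_le_sum_abs _ _
    _ ≤ ∑ γ, B * |a γ| := Finset.sum_le_sum fun γ _ => by
        rw [abs_mul, mul_comm]
        exact mul_le_mul_of_nonneg_right (Fin.cases hc hv γ) (abs_nonneg _)
    _ = B * ∑ γ, |a γ| := (Finset.mul_sum _ _ _).symm

end Coefficients

section LocalKernel

variable {α : Type*} [PseudoMetricSpace α] [SecondCountableTopology α] [MeasurableSpace α]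
  [OpensMeasurableSpace α] {μ : Measure α} [SFinite μ] {r : ℝ}

theorem enorm_integral_mul_integral_le {V : ℝ≥0∞} (hV : ∀ x, μ (closedBall x r) ≤ V)
    {u h : α → ℝ} {κ : α → α → ℝ} (hu : AEStronglyMeasurable u μ) (hh : AEStronglyMeasurable h μ)
    (hκ : ∀ x y, |κ x y| ≤ h y) (hκ_supp : ∀ x y, r < dist x y → κ x y = 0) :
    ‖∫ x, u x * ∫ y, κ x y ∂μ ∂μ‖ₑ ≤ V * eLpNorm u 2 μ * eLpNorm h 2 μ := by
  set k : α → α → ℝ≥0∞ := fun x => (closedBall x r).indicator 1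
  have hk : Measurable (Function.uncurry k) :=
    measurable_one.indicator
      (isClosed_le (continuous_snd.dist continuous_fst) continuous_const).measurableSet
  have hk_row : ∀ x, ∫⁻ y, k x y ∂μ ≤ V := fun x => by
    rw [lintegral_indicator_one measurableSet_closedBall]; exact hV x
  have hk_comm : ∀ x y, k x y = k y x := fun x y => by
    simp only [k, Set.indicator, Pi.one_apply, mem_closedBall, dist_comm]
  have hk_col : ∀ y, ∫⁻ x, k x y ∂μ ≤ V := fun y =>
    (lintegral_congr fun x => hk_comm x y).trans_le (hk_row y)
  have hκk : ∀ x y, ‖κ x y‖ₑ ≤ k x y * ‖h y‖ₑ := fun x y => by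
    simp only [k]
    by_cases hxy : y ∈ closedBall x r
    · rw [Set.indicator_of_mem hxy, Pi.one_apply, one_mul, Real.enorm_eq_ofReal_abs,
        Real.enorm_eq_ofReal_abs]
      exact ENNReal.ofReal_le_ofReal ((hκ x y).trans (le_abs_self _))
    · rw [Set.indicator_of_notMem hxy, zero_mul,
        hκ_supp x y (by rw [dist_comm]; exact lt_of_not_ge hxy), enorm_zero]
  calc ‖∫ x, u x * ∫ y, κ x y ∂μ ∂μ‖ₑ ≤ ∫⁻ x, ‖u x‖ₑ * ‖∫ y, κ x y ∂μ‖ₑ ∂μ := by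
        simpa only [enorm_mul] using
          enorm_integral_le_lintegral_enorm (μ := μ) (fun x => u x * ∫ y, κ x y ∂μ)
    _ ≤ ∫⁻ x, ∫⁻ y, ‖u x‖ₑ * k x y * ‖h y‖ₑ ∂μ ∂μ := by
        refine lintegral_mono fun x => ?_
        simp_rw [mul_assoc]
        rw [lintegral_const_mul' _ _ enorm_ne_top]
        gcongr
        exact (enorm_integral_le_lintegral_enorm _).trans (lintegral_mono (hκk x))
    _ ≤ (V * V) ^ (1 / 2 : ℝ) * eLpNorm (‖u ·‖ₑ) 2 μ * eLpNorm (‖h ·‖ₑ) 2 μ :=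
        lintegral_lintegral_mul_kernel_mul_le hu.enorm hh.enorm hk hk_row hk_col
    _ = V * eLpNorm u 2 μ * eLpNorm h 2 μ := by
        rw [eLpNorm_enorm, eLpNorm_enorm, ← sq, ← ENNReal.rpow_natCast, ← ENNReal.rpow_mul]
        norm_num

theorem abs_integral_mul_integral_le {V : ℝ≥0} (hV : ∀ x, μ (closedBall x r) ≤ V)
    {u h : α → ℝ} {κ : α → α → ℝ} (hu : MemLp u 2 μ) (hh : MemLp h 2 μ)
    (hκ : ∀ x y, |κ x y| ≤ h y) (hκ_supp : ∀ x y, r < dist x y → κ x y = 0) :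
    |∫ x, u x * ∫ y, κ x y ∂μ ∂μ| ≤ V * (eLpNorm u 2 μ).toReal * (eLpNorm h 2 μ).toReal := by
  have hfin : (V : ℝ≥0∞) * eLpNorm u 2 μ * eLpNorm h 2 μ ≠ ∞ :=
    ENNReal.mul_ne_top (ENNReal.mul_ne_top ENNReal.coe_ne_top hu.2.ne) hh.2.ne
  simpa only [Real.enorm_eq_ofReal_abs, ENNReal.toReal_ofReal (abs_nonneg _),
    ENNReal.toReal_mul, ENNReal.coe_toReal] using
    ENNReal.toReal_mono hfin (enorm_integral_mul_integral_le hV hu.1 hh.1 hκ hκ_supp)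

theorem abs_integral_mul_integral_drift_le {V : ℝ≥0} (hV : ∀ x, μ (closedBall x r) ≤ V)
    {B : ℝ} (hB : 0 ≤ B) {n : ℕ} {u : α → ℝ} {f : Fin (n + 1) → α → ℝ} (hu : MemLp u 2 μ)
    (hf : ∀ γ, MemLp (f γ) 2 μ) {φ : α → α → ℝ} {ψ : Fin n → α → α → ℝ}
    (hφ : ∀ x y, |φ x y| ≤ B) (hψ : ∀ i x y, |ψ i x y| ≤ B)
    (hφ_supp : ∀ x y, r < dist x y → φ x y = 0)
    (hψ_supp : ∀ i x y, r < dist x y → ψ i x y = 0) :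
    |∫ x, u x * ∫ y, (f 0 y * φ x y + ∑ i, f i.succ y * ψ i x y) ∂μ ∂μ| ≤
      V * √(n + 1) * ((eLpNorm u 2 μ).toReal * √(∑ γ, (eLpNorm (f γ) 2 μ).toReal ^ 2)) * B := by
  set S : α → ℝ := fun y => ∑ γ, ‖f γ y‖
  have hS : MemLp (B • S) 2 μ := (memLp_finsetSum _ fun γ _ => (hf γ).norm).const_smul B
  have hκ : ∀ x y, |f 0 y * φ x y + ∑ i, f i.succ y * ψ i x y| ≤ (B • S) y := fun x y => by
    simpa only [S, Pi.smul_apply, smul_eq_mul, Real.norm_eq_abs] using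
      abs_mul_add_sum_mul_le (fun γ => f γ y) (hφ x y) (fun i => hψ i x y)
  have hκ_supp : ∀ x y, r < dist x y → f 0 y * φ x y + ∑ i, f i.succ y * ψ i x y = 0 :=
    fun x y hxy => by simp [hφ_supp x y hxy, hψ_supp _ x y hxy]
  have hS_norm : (eLpNorm (B • S) 2 μ).toReal ≤
      B * (√(n + 1) * √(∑ γ, (eLpNorm (f γ) 2 μ).toReal ^ 2)) := by
    rw [eLpNorm_const_smul, ENNReal.toReal_mul, Real.enorm_eq_ofReal_abs,
      ENNReal.toReal_ofReal (abs_nonneg B), abs_of_nonneg hB]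
    gcongr
    simpa only [Fintype.card_fin, Nat.cast_add, Nat.cast_one] using
      toReal_eLpNorm_sum_norm_le one_le_two hf
  calc _ ≤ V * (eLpNorm u 2 μ).toReal * (eLpNorm (B • S) 2 μ).toReal :=
        abs_integral_mul_integral_le hV hu hS hκ hκ_supp
    _ ≤ V * (eLpNorm u 2 μ).toReal *
          (B * (√(n + 1) * √(∑ γ, (eLpNorm (f γ) 2 μ).toReal ^ 2))) := by gcongr
    _ = _ := by ring

end LocalKernel

section Lipschitz

variable {E : Type*} [NormedAddCommGroup E] [NormedSpace ℝ E]

lemma fderiv_eq_zero_of_isOpen {F : Type*} [NormedAddCommGroup F] [NormedSpace ℝ F]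
    {f : E → F} {U : Set E} (hU : IsOpen U) (hf : ∀ x ∈ U, f x = 0) {x : E} (hx : x ∈ U) :
    fderiv ℝ f x = 0 := by
  have hf_nhds : f =ᶠ[nhds x] fun _ => 0 := Filter.eventually_of_mem (hU.mem_nhds hx) hf
  rw [hf_nhds.fderiv_eq, fderiv_const_apply]

lemma abs_fderiv_apply_le_of_lipschitz {f : E → ℝ} {K : ℝ≥0} (hf : LipschitzWith K f) (x : E)
    {v : E} (hv : ‖v‖ ≤ 1) : |fderiv ℝ f x v| ≤ K :=
  calc |fderiv ℝ f x v| ≤ ‖fderiv ℝ f x‖ * ‖v‖ := (fderiv ℝ f x).le_opNorm v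
    _ ≤ K * 1 := mul_le_mul (norm_fderiv_le_of_lipschitz ℝ hf) hv (norm_nonneg _) K.coe_nonneg
    _ = K := mul_one _

end Lipschitz

lemma exists_pos_forall_addHaar_closedBall_le {E : Type*} [NormedAddCommGroup E]
    [NormedSpace ℝ E] [MeasurableSpace E] [BorelSpace E] [FiniteDimensional ℝ E] (μ : Measure E)
    [μ.IsAddHaarMeasure] {r : ℝ} (hr : 0 < r) :
    ∃ V : ℝ≥0, 0 < V ∧ ∀ x, μ (closedBall x r) ≤ V := by
  refine ⟨(μ (closedBall 0 r)).toNNReal, ENNReal.toNNReal_pos (measure_closedBall_pos _ _ hr).ne'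
    measure_closedBall_lt_top.ne, fun x => ?_⟩
  rw [Measure.addHaar_closedBall_center, ENNReal.coe_toNNReal measure_closedBall_lt_top.ne]

theorem tensorized_drift_bound_general (d : ℕ) :
    ∃ C : ℝ, 0 < C ∧
      ∀ (u₁ u₂ : EuclideanSpace ℝ (Fin d) → ℝ)
        (f g : Fin (d + 1) → EuclideanSpace ℝ (Fin d) → ℝ),
        MemLp u₁ 2 volume → MemLp u₂ 2 volume →
        (∀ γ, MemLp (f γ) 2 volume) → (∀ γ, MemLp (g γ) 2 volume) →
        ∀ (Φ : EuclideanSpace ℝ (Fin d) × EuclideanSpace ℝ (Fin d) → ℝ)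
          (K : ℝ≥0) (MΦ : ℝ),
          LipschitzWith K Φ → (∀ p, |Φ p| ≤ MΦ) →
          (∀ p : EuclideanSpace ℝ (Fin d) × EuclideanSpace ℝ (Fin d),
            ¬ ‖p.1 - p.2‖ ≤ 2 → Φ p = 0) →
          |(∫ x, u₁ x * ∫ y, (f 0 y * Φ (x, y) +
              ∑ i : Fin d, f i.succ y *
                fderiv ℝ Φ (x, y) (0, EuclideanSpace.single i 1))) +
            (∫ y, u₂ y * ∫ x, (g 0 x * Φ (x, y) +
              ∑ i : Fin d, g i.succ x *
                fderiv ℝ Φ (x, y) (EuclideanSpace.single i 1, 0)))| ≤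
            C * ((eLpNorm u₁ 2 volume).toReal *
                    Real.sqrt (∑ γ, (eLpNorm (f γ) 2 volume).toReal ^ 2) +
                  (eLpNorm u₂ 2 volume).toReal *
                    Real.sqrt (∑ γ, (eLpNorm (g γ) 2 volume).toReal ^ 2)) *
              (MΦ + K) := by
  obtain ⟨V, hV_pos, hV⟩ :=
    exists_pos_forall_addHaar_closedBall_le (volume : Measure (EuclideanSpace ℝ (Fin d))) two_pos
  refine ⟨V * √(d + 1), by positivity, ?_⟩
  intro u₁ u₂ f g hu₁ hu₂ hf hg Φ K MΦ hK hM hΦ_supp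
  have hM_nonneg : 0 ≤ MΦ := (abs_nonneg _).trans (hM 0)
  have hB : 0 ≤ MΦ + K := add_nonneg hM_nonneg K.coe_nonneg
  have hΦ : ∀ p, |Φ p| ≤ MΦ + K := fun p => (hM p).trans (le_add_of_nonneg_right K.coe_nonneg)
  have hDΦ : ∀ p v, ‖v‖ ≤ 1 → |fderiv ℝ Φ p v| ≤ MΦ + K := fun p v hv =>
    (abs_fderiv_apply_le_of_lipschitz hK p hv).trans (le_add_of_nonneg_left hM_nonneg)
  have hΦ_supp' : ∀ x y, 2 < dist x y → Φ (x, y) = 0 := fun x y h =>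
    hΦ_supp _ (by simpa [dist_eq_norm] using h)
  have hDΦ_supp : ∀ x y, 2 < dist x y → fderiv ℝ Φ (x, y) = 0 := fun x y h =>
    fderiv_eq_zero_of_isOpen (f := Φ) (isOpen_lt continuous_const continuous_dist)
      (fun p hp => hΦ_supp' p.1 p.2 hp) h
  have h₁ := abs_integral_mul_integral_drift_le hV hB hu₁ hf (φ := fun x y => Φ (x, y))
    (ψ := fun i x y => fderiv ℝ Φ (x, y) (0, EuclideanSpace.single i 1))
    (fun x y => hΦ _) (fun i x y => hDΦ _ _ (by simp))
    hΦ_supp' (fun i x y h => by simp [hDΦ_supp x y h])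
  have h₂ := abs_integral_mul_integral_drift_le hV hB hu₂ hg (φ := fun y x => Φ (x, y))
    (ψ := fun i y x => fderiv ℝ Φ (x, y) (EuclideanSpace.single i 1, 0))
    (fun y x => hΦ _) (fun i y x => hDΦ _ _ (by simp))
    (fun y x h => hΦ_supp' x y (by rwa [dist_comm]))
    (fun i y x h => by simp [hDΦ_supp x y (by rwa [dist_comm])])
  calc _ ≤ _ := abs_add_le _ _
    _ ≤ _ := add_le_add h₁ h₂
    _ = _ := by ring

/-- **Tensorized drift bound** (core estimate of Lemma 4.2).  There is a
constant `C`, depending only on `d`, such that for all `u¹, u² ∈ L²(ℝ^d)`,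
all `f⁰,…,f^d, g⁰,…,g^d ∈ L²(ℝ^d)` and every bounded Lipschitz `Φ`
vanishing outside the strip `Ω = {|x−y| ≤ 2}`,
`|∫ u¹(x)(∫ (f⁰Φ + Σ f^i ∂_{y_i}Φ) dy) dx + ∫ u²(y)(∫ (g⁰Φ + Σ g^i ∂_{x_i}Φ) dx) dy|
 ≤ C(‖u¹‖(Σ‖f^γ‖²)^{1/2} + ‖u²‖(Σ‖g^γ‖²)^{1/2})(sup|Φ| + Lip(Φ))`. -/
theorem tensorized_drift_bound (d : ℕ) (hd : 1 ≤ d) :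
    ∃ C : ℝ, 0 < C ∧
      ∀ (u₁ u₂ : EuclideanSpace ℝ (Fin d) → ℝ)
        (f g : Fin (d + 1) → EuclideanSpace ℝ (Fin d) → ℝ),
        MemLp u₁ 2 volume → MemLp u₂ 2 volume →
        (∀ γ, MemLp (f γ) 2 volume) → (∀ γ, MemLp (g γ) 2 volume) →
        ∀ (Φ : EuclideanSpace ℝ (Fin d) × EuclideanSpace ℝ (Fin d) → ℝ)
          (K : ℝ≥0) (MΦ : ℝ),
          LipschitzWith K Φ → (∀ p, |Φ p| ≤ MΦ) →
          (∀ p : EuclideanSpace ℝ (Fin d) × EuclideanSpace ℝ (Fin d),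
            ¬ ‖p.1 - p.2‖ ≤ 2 → Φ p = 0) →
          |(∫ x, u₁ x * ∫ y, (f 0 y * Φ (x, y) +
              ∑ i : Fin d, f i.succ y *
                fderiv ℝ Φ (x, y) (0, EuclideanSpace.single i 1))) +
            (∫ y, u₂ y * ∫ x, (g 0 x * Φ (x, y) +
              ∑ i : Fin d, g i.succ x *
                fderiv ℝ Φ (x, y) (EuclideanSpace.single i 1, 0)))| ≤
            C * ((eLpNorm u₁ 2 volume).toReal *
                    Real.sqrt (∑ γ, (eLpNorm (f γ) 2 volume).toReal ^ 2) +
                  (eLpNorm u₂ 2 volume).toReal *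
                    Real.sqrt (∑ γ, (eLpNorm (g γ) 2 volume).toReal ^ 2)) *
              (MΦ + K) :=
  tensorized_drift_bound_general d
end
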